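/- For every s ≥ 1 and every v ∈ ℝˢ, ‖v‖₂ ≤ ‖v‖₁/√s + (√s/4)·‖v‖_∞. -/

import Mathlib

open MeasureTheory ProbabilityTheory Matrix Real

noncomputable section

/-- `sgn z = 1` if `z ≥ 0`, `-1` otherwise. -/
def sgn (z : ℝ) : ℝ := if 0 ≤ z then 1 else -1

/-- Euclidean (ℓ²) norm of a finite vector. -/
def l2norm {k : ℕ} (v : Fin k → ℝ) : ℝ := Real.sqrt (∑ i, v i ^ 2)

/-- ℓ¹ norm of a finite vector. -/
def l1norm {k : ℕ} (v : Fin k → ℝ) : ℝ := ∑ i, |v i|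

/-- ℓ^∞ norm (maximum absolute entry) of a finite vector. -/
def linfNorm {k : ℕ} (v : Fin k → ℝ) : ℝ := ⨆ i, |v i|

/-- number of nonzero entries of a finite vector. -/
def l0norm {k : ℕ} (v : Fin k → ℝ) : ℕ := (Finset.univ.filter (fun i => v i ≠ 0)).card

/-- largest eigenvalue of a symmetric matrix, as the sup of the Rayleigh quotient
over the Euclidean unit sphere. -/
def gammaMax {ι : Type*} [Fintype ι] (M : Matrix ι ι ℝ) : ℝ :=
  ⨆ x : {x : ι → ℝ // ∑ i, x i ^ 2 = 1}, (x : ι → ℝ) ⬝ᵥ M.mulVec (x : ι → ℝ)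

/-- smallest eigenvalue of a symmetric matrix, as the inf of the Rayleigh quotient
over the Euclidean unit sphere. -/
def gammaMin {ι : Type*} [Fintype ι] (M : Matrix ι ι ℝ) : ℝ :=
  ⨅ x : {x : ι → ℝ // ∑ i, x i ^ 2 = 1}, (x : ι → ℝ) ⬝ᵥ M.mulVec (x : ι → ℝ)

/-- condition number `γ_max / γ_min`. -/
def kappa {ι : Type*} [Fintype ι] (M : Matrix ι ι ℝ) : ℝ := gammaMax M / gammaMin M

/-- operator norm of a matrix, induced by the Euclidean norms. -/
def opNorm {ι κ : Type*} [Fintype ι] [Fintype κ] (M : Matrix ι κ ℝ) : ℝ :=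
  ⨆ x : {x : κ → ℝ // ∑ j, x j ^ 2 = 1}, Real.sqrt (∑ i, (M.mulVec (x : κ → ℝ)) i ^ 2)

/-- maximum absolute entry of a matrix. -/
def matInfNorm {ι κ : Type*} [Fintype ι] [Fintype κ] (M : Matrix ι κ ℝ) : ℝ :=
  ⨆ p : ι × κ, |M p.1 p.2|

/-- A random vector `ψ` is centered Gaussian with covariance matrix `S` iff every linear
functional of it is a centered real Gaussian with the corresponding variance. -/
def IsGaussianVector {Ω : Type*} [MeasurableSpace Ω] (μ : Measure Ω) {n : ℕ}
    (ψ : Ω → Fin n → ℝ) (S : Matrix (Fin n) (Fin n) ℝ) : Prop :=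
  ∀ a : Fin n → ℝ,
    Measure.map (fun ω => ∑ i, a i * ψ ω i) μ =
      gaussianReal 0 (Real.toNNReal (a ⬝ᵥ S.mulVec a))

/-! Each `v i ^ 2 ≤ |v i| · ‖v‖_∞`, so `‖v‖₂² ≤ ‖v‖₁ ‖v‖_∞`; the bound is then AM–GM,
`√(ab) ≤ a / c + (c / 4) b`, with the balancing factor `c = √s`. -/

theorem Real.sqrt_mul_le_div_add_mul {a b c : ℝ} (ha : 0 ≤ a) (hb : 0 ≤ b) (hc : 0 < c) :
    √(a * b) ≤ a / c + c / 4 * b := by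
  have hac : a / c * c = a := div_mul_cancel₀ a hc.ne'
  rw [Real.sqrt_le_iff]
  refine ⟨by positivity, ?_⟩
  nlinarith [sq_nonneg (a / c - c / 4 * b)]

section Norms

variable {k : ℕ} (v : Fin k → ℝ)

theorem abs_le_linfNorm (i : Fin k) : |v i| ≤ linfNorm v :=
  le_ciSup (f := fun i => |v i|) (Set.finite_range _).bddAbove i

theorem linfNorm_nonneg : 0 ≤ linfNorm v :=
  Real.iSup_nonneg fun _ => abs_nonneg _

theorem l1norm_nonneg : 0 ≤ l1norm v :=
  Finset.sum_nonneg fun _ _ => abs_nonneg _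

theorem sum_sq_le_l1norm_mul_linfNorm : ∑ i, v i ^ 2 ≤ l1norm v * linfNorm v := by
  rw [l1norm, Finset.sum_mul]
  refine Finset.sum_le_sum fun i _ => ?_
  rw [← sq_abs, sq]
  exact mul_le_mul_of_nonneg_left (abs_le_linfNorm v i) (abs_nonneg _)

theorem l2norm_le_sqrt_l1norm_mul_linfNorm : l2norm v ≤ √(l1norm v * linfNorm v) :=
  Real.sqrt_le_sqrt (sum_sq_le_l1norm_mul_linfNorm v)

end Norms

theorem l2_le_l1_add_linf_general (s : ℕ) (v : Fin s → ℝ) :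
    l2norm v ≤ l1norm v / Real.sqrt (s : ℝ) + Real.sqrt (s : ℝ) / 4 * linfNorm v := by
  rcases s.eq_zero_or_pos with rfl | hs
  · simp [l2norm]
  · calc l2norm v ≤ √(l1norm v * linfNorm v) := l2norm_le_sqrt_l1norm_mul_linfNorm v
      _ ≤ _ := Real.sqrt_mul_le_div_add_mul (l1norm_nonneg v) (linfNorm_nonneg v) (by positivity)

/-- For every `s ≥ 1` and `v ∈ ℝˢ`,
`‖v‖₂ ≤ ‖v‖₁/√s + (√s/4)‖v‖_∞`. -/
theorem l2_le_l1_add_linf (s : ℕ) (hs : 1 ≤ s) (v : Fin s → ℝ) :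
    l2norm v ≤ l1norm v / Real.sqrt (s : ℝ) + Real.sqrt (s : ℝ) / 4 * linfNorm v :=
  l2_le_l1_add_linf_general s v
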